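/- The set W₋ = {(x,y,ẋ,ẏ) : E < E*, W(x,y) ≤ 0} is invariant under the flow of the Hill's lunar problem: if a solution starts in W₋ it remains in W₋ for all times of existence. -/

import Mathlib

noncomputable def V (α x y : ℝ) : ℝ :=
  -((α + 2) / 2) * x ^ 2 - (α + 2) / (x ^ 2 + y ^ 2) ^ (α / 2)

noncomputable def Vx (α x y : ℝ) : ℝ := deriv (fun t => V α t y) x
noncomputable def Vy (α x y : ℝ) : ℝ := deriv (fun t => V α x t) y

noncomputable def W (α x y : ℝ) : ℝ :=
  (α + 2) * (x ^ 2 - α / (x ^ 2 + y ^ 2) ^ (α / 2))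

noncomputable def E (α x y vx vy : ℝ) : ℝ := (1 / 2) * (vx ^ 2 + vy ^ 2) + V α x y

noncomputable def Estar (α : ℝ) : ℝ := -(1 / 2) * (α + 2) ^ 2 * α ^ (-(α / (α + 2)))

/-!
Along a solution the energy `E` is conserved, so it stays below `E*`. On the zero set of `W`,
with `r = √(x² + y²)`, one has `x² r^α = α`, hence `V = -(α + 2)² / (2 r^α)` and
`r^(α + 2) ≥ x² r^α = α`, which gives `V ≥ E*`. Since `E ≥ V`, a trajectory below the energy `E*`
never meets `W = 0`; `W` is continuous along it and the time interval is connected, so `W` keeps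
the negative sign it has at `t₀`.
-/

theorem hasDerivAt_comp_of_differentiableAt_uncurry {f : ℝ → ℝ → ℝ} {x y : ℝ → ℝ} {vx vy t : ℝ}
    (hf : DifferentiableAt ℝ (fun p : ℝ × ℝ => f p.1 p.2) (x t, y t))
    (hx : HasDerivAt x vx t) (hy : HasDerivAt y vy t) :
    HasDerivAt (fun s => f (x s) (y s))
      (deriv (fun u => f u (y t)) (x t) * vx + deriv (fun v => f (x t) v) (y t) * vy) t := by
  set L := fderiv ℝ (fun p : ℝ × ℝ => f p.1 p.2) (x t, y t)
  have hL := hf.hasFDerivAt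
  have h₁ : HasDerivAt (fun u => f u (y t)) (L (1, 0)) (x t) := by
    have := hL.comp_hasDerivAt (x t) ((hasDerivAt_id (x t)).prodMk (hasDerivAt_const (x t) (y t)))
    exact this
  have h₂ : HasDerivAt (fun v => f (x t) v) (L (0, 1)) (y t) := by
    have := hL.comp_hasDerivAt (y t) ((hasDerivAt_const (y t) (x t)).prodMk (hasDerivAt_id (y t)))
    exact this
  have hlin : L (vx, vy) = L (1, 0) * vx + L (0, 1) * vy := by
    rw [show (vx, vy) = vx • ((1 : ℝ), (0 : ℝ)) + vy • ((0 : ℝ), (1 : ℝ)) by simp,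
      map_add, map_smul, map_smul, smul_eq_mul, smul_eq_mul, mul_comm vx, mul_comm vy]
  rw [h₁.deriv, h₂.deriv, ← hlin]
  exact hL.comp_hasDerivAt t (hx.prodMk hy)

theorem Convex.eq_of_forall_hasDerivAt_zero {I : Set ℝ} {f : ℝ → ℝ} {a b : ℝ}
    (hI : Convex ℝ I) (hf : ∀ t ∈ I, HasDerivAt f 0 t) (ha : a ∈ I) (hb : b ∈ I) :
    f b = f a := by
  have := hI.norm_image_sub_le_of_norm_hasDerivWithin_le (C := 0)
    (fun t ht => (hf t ht).hasDerivWithinAt) (fun _ _ => by simp) ha hb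
  simpa [sub_eq_zero] using this

theorem IsPreconnected.forall_neg_of_ne_zero {X : Type*} [TopologicalSpace X] {S : Set X}
    {f : X → ℝ} {a : X} (hS : IsPreconnected S) (hf : ContinuousOn f S)
    (hne : ∀ t ∈ S, f t ≠ 0) (ha : a ∈ S) (hfa : f a < 0) : ∀ t ∈ S, f t < 0 := by
  intro t ht
  by_contra! hft
  obtain ⟨s, hs, hfs⟩ := hS.intermediate_value ha ht hf ⟨hfa.le, hft⟩
  exact hne s hs hfs

theorem sq_add_sq_pos_of_ne {a b : ℝ} (h : (a, b) ≠ (0, 0)) : 0 < a ^ 2 + b ^ 2 := by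
  rcases eq_or_ne a 0 with rfl | _
  · have hb : b ≠ 0 := fun hb => h (by rw [hb])
    positivity
  · positivity

theorem differentiableAt_V (α : ℝ) {p : ℝ × ℝ} (hp : 0 < p.1 ^ 2 + p.2 ^ 2) :
    DifferentiableAt ℝ (fun q : ℝ × ℝ => V α q.1 q.2) p := by
  have := (Real.rpow_pos_of_pos hp (α / 2)).ne'
  unfold V
  fun_prop (disch := first | assumption | exact hp.ne')

theorem continuousAt_W (α : ℝ) {p : ℝ × ℝ} (hp : 0 < p.1 ^ 2 + p.2 ^ 2) :
    ContinuousAt (fun q : ℝ × ℝ => W α q.1 q.2) p := by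
  have := (Real.rpow_pos_of_pos hp (α / 2)).ne'
  unfold W
  fun_prop (disch := first | assumption | exact Or.inl hp.ne')

section
variable {α a b : ℝ}

theorem sq_mul_rpow_eq_of_W_eq_zero (hα : 0 < α) (hr : 0 < a ^ 2 + b ^ 2) (hW : W α a b = 0) :
    a ^ 2 * (a ^ 2 + b ^ 2) ^ (α / 2) = α := by
  rw [W, mul_eq_zero, sub_eq_zero] at hW
  nth_rw 1 [hW.resolve_left (by linarith)]
  rw [div_mul_cancel₀ _ (Real.rpow_pos_of_pos hr _).ne']

theorem V_eq_of_W_eq_zero (hα : 0 < α) (hr : 0 < a ^ 2 + b ^ 2) (hW : W α a b = 0) :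
    V α a b = -((α + 2) ^ 2 / (2 * (a ^ 2 + b ^ 2) ^ (α / 2))) := by
  have hP := (Real.rpow_pos_of_pos hr (α / 2)).ne'
  have ha := sq_mul_rpow_eq_of_W_eq_zero hα hr hW
  rw [V]
  field_simp
  linear_combination -ha

theorem rpow_le_of_W_eq_zero (hα : 0 < α) (hr : 0 < a ^ 2 + b ^ 2) (hW : W α a b = 0) :
    α ^ (α / (α + 2)) ≤ (a ^ 2 + b ^ 2) ^ (α / 2) := by
  have hle : α ≤ (a ^ 2 + b ^ 2) ^ ((α + 2) / 2) :=
    calc α = a ^ 2 * (a ^ 2 + b ^ 2) ^ (α / 2) := (sq_mul_rpow_eq_of_W_eq_zero hα hr hW).symm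
      _ ≤ (a ^ 2 + b ^ 2) * (a ^ 2 + b ^ 2) ^ (α / 2) := by gcongr; nlinarith [sq_nonneg b]
      _ = (a ^ 2 + b ^ 2) ^ ((α + 2) / 2) := by
        rw [show (α + 2) / 2 = 1 + α / 2 by ring, Real.rpow_add hr, Real.rpow_one]
  calc α ^ (α / (α + 2)) ≤ ((a ^ 2 + b ^ 2) ^ ((α + 2) / 2)) ^ (α / (α + 2)) := by
        gcongr
    _ = (a ^ 2 + b ^ 2) ^ (α / 2) := by
        rw [← Real.rpow_mul hr.le]; congr 1; field_simp

theorem Estar_le_V_of_W_eq_zero (hα : 0 < α) (hr : 0 < a ^ 2 + b ^ 2) (hW : W α a b = 0) :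
    Estar α ≤ V α a b := by
  calc Estar α = -((α + 2) ^ 2 / (2 * α ^ (α / (α + 2)))) := by
        rw [Estar, Real.rpow_neg hα.le]; ring
    _ ≤ -((α + 2) ^ 2 / (2 * (a ^ 2 + b ^ 2) ^ (α / 2))) := by
        have := rpow_le_of_W_eq_zero hα hr hW
        have : 0 < α ^ (α / (α + 2)) := Real.rpow_pos_of_pos hα _
        gcongr
    _ = V α a b := (V_eq_of_W_eq_zero hα hr hW).symm

theorem V_le_E (α a b vx vy : ℝ) : V α a b ≤ E α a b vx vy := by
  rw [E]; nlinarith [sq_nonneg vx, sq_nonneg vy]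

theorem W_ne_zero_of_E_lt_Estar {vx vy : ℝ} (hα : 0 < α) (hr : 0 < a ^ 2 + b ^ 2)
    (hE : E α a b vx vy < Estar α) : W α a b ≠ 0 := fun hW =>
  (hE.trans_le ((Estar_le_V_of_W_eq_zero hα hr hW).trans (V_le_E α a b vx vy))).false

end

section
variable {α : ℝ} {x y x' y' x'' y'' : ℝ → ℝ} {t : ℝ}

theorem hasDerivAt_E_comp_eq_zero (hx : HasDerivAt x (x' t) t) (hy : HasDerivAt y (y' t) t)
    (hx' : HasDerivAt x' (x'' t) t) (hy' : HasDerivAt y' (y'' t) t)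
    (hr : 0 < x t ^ 2 + y t ^ 2)
    (heq1 : x'' t - 2 * y' t = -Vx α (x t) (y t)) (heq2 : y'' t + 2 * x' t = -Vy α (x t) (y t)) :
    HasDerivAt (fun s => E α (x s) (y s) (x' s) (y' s)) 0 t := by
  have hV := hasDerivAt_comp_of_differentiableAt_uncurry (differentiableAt_V α hr) hx hy
  refine ((((hx'.pow 2).add (hy'.pow 2)).const_mul (1 / 2)).add hV).congr_deriv ?_
  simp only [Vx, Vy] at heq1 heq2
  linear_combination x' t * heq1 + y' t * heq2

theorem continuousAt_W_comp (hx : ContinuousAt x t) (hy : ContinuousAt y t)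
    (hr : 0 < x t ^ 2 + y t ^ 2) : ContinuousAt (fun s => W α (x s) (y s)) t :=
  (continuousAt_W α (p := (x t, y t)) hr).comp (f := fun s => (x s, y s)) (hx.prodMk hy)

end

/-- Invariance of `W₋ = {E < E*, W ≤ 0}` under the flow of the Hill's lunar problem. -/
theorem Wminus_invariant (α : ℝ) (hα : 0 < α) (I : Set ℝ) (hI : Convex ℝ I)
    (x y x' y' x'' y'' : ℝ → ℝ)
    (hx : ∀ t ∈ I, HasDerivAt x (x' t) t) (hy : ∀ t ∈ I, HasDerivAt y (y' t) t)
    (hx' : ∀ t ∈ I, HasDerivAt x' (x'' t) t) (hy' : ∀ t ∈ I, HasDerivAt y' (y'' t) t)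
    (hne : ∀ t ∈ I, (x t, y t) ≠ (0, 0))
    (heq1 : ∀ t ∈ I, x'' t - 2 * y' t = -Vx α (x t) (y t))
    (heq2 : ∀ t ∈ I, y'' t + 2 * x' t = -Vy α (x t) (y t))
    (t₀ : ℝ) (ht₀ : t₀ ∈ I)
    (hE0 : E α (x t₀) (y t₀) (x' t₀) (y' t₀) < Estar α)
    (hW0 : W α (x t₀) (y t₀) ≤ 0) :
    ∀ t ∈ I, E α (x t) (y t) (x' t) (y' t) < Estar α ∧ W α (x t) (y t) ≤ 0 := by
  have hr : ∀ t ∈ I, 0 < x t ^ 2 + y t ^ 2 := fun t ht => sq_add_sq_pos_of_ne (hne t ht)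
  have hEconst : ∀ t ∈ I, E α (x t) (y t) (x' t) (y' t) = E α (x t₀) (y t₀) (x' t₀) (y' t₀) :=
    fun t ht => hI.eq_of_forall_hasDerivAt_zero (fun s hs => hasDerivAt_E_comp_eq_zero (hx s hs)
      (hy s hs) (hx' s hs) (hy' s hs) (hr s hs) (heq1 s hs) (heq2 s hs)) ht₀ ht
  have hE : ∀ t ∈ I, E α (x t) (y t) (x' t) (y' t) < Estar α := fun t ht =>
    (hEconst t ht).symm ▸ hE0
  have hW : ∀ t ∈ I, W α (x t) (y t) ≠ 0 := fun t ht =>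
    W_ne_zero_of_E_lt_Estar hα (hr t ht) (hE t ht)
  have hWcont : ContinuousOn (fun t => W α (x t) (y t)) I := fun t ht =>
    (continuousAt_W_comp (hx t ht).continuousAt (hy t ht).continuousAt (hr t ht)).continuousWithinAt
  have hWneg := hI.isPreconnected.forall_neg_of_ne_zero hWcont hW ht₀ (hW0.lt_of_ne (hW t₀ ht₀))
  exact fun t ht => ⟨hE t ht, (hWneg t ht).le⟩
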